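/- Let H_KK = (p_x²+p_y²)/2 + (1/4)x y² + (4/3)x³ and H_2 = p_y^4 + p_y² x y² − (1/3) p_x p_y y³ − (1/12) x² y^4 − (1/72) y^6. Then {H_KK, H_2} = 0 for the canonical Poisson bracket on ℝ^4. -/

import Mathlib

noncomputable section

open Real Set

/-- Partial derivative w.r.t. the 1st argument. -/
def pd1 (F : ℝ → ℝ → ℝ → ℝ → ℝ) (x y z w : ℝ) : ℝ := deriv (fun t => F t y z w) x
/-- Partial derivative w.r.t. the 2nd argument. -/
def pd2 (F : ℝ → ℝ → ℝ → ℝ → ℝ) (x y z w : ℝ) : ℝ := deriv (fun t => F x t z w) y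
/-- Partial derivative w.r.t. the 3rd argument. -/
def pd3 (F : ℝ → ℝ → ℝ → ℝ → ℝ) (x y z w : ℝ) : ℝ := deriv (fun t => F x y t w) z
/-- Partial derivative w.r.t. the 4th argument. -/
def pd4 (F : ℝ → ℝ → ℝ → ℝ → ℝ) (x y z w : ℝ) : ℝ := deriv (fun t => F x y z t) w

/-- Canonical Poisson bracket on ℝ⁴ with coordinates (q₁, q₂, p₁, p₂). -/
def pb (F G : ℝ → ℝ → ℝ → ℝ → ℝ) (x y z w : ℝ) : ℝ :=
  pd1 F x y z w * pd3 G x y z w - pd3 F x y z w * pd1 G x y z w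
  + pd2 F x y z w * pd4 G x y z w - pd4 F x y z w * pd2 G x y z w

/-- The Kaup–Kupershmidt Hénon–Heiles Hamiltonian (c₁ = 0, a = 1/4). -/
def HKK : ℝ → ℝ → ℝ → ℝ → ℝ := fun x y px py =>
  (px ^ 2 + py ^ 2) / 2 + 1 / 4 * x * y ^ 2 + 4 / 3 * x ^ 3

/-- The quartic second integral of the KK Hénon–Heiles system. -/
def HKK2 : ℝ → ℝ → ℝ → ℝ → ℝ := fun x y px py =>
  py ^ 4 + py ^ 2 * x * y ^ 2 - 1 / 3 * px * py * y ^ 3 -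
    1 / 12 * x ^ 2 * y ^ 4 - 1 / 72 * y ^ 6

theorem KK_HenonHeiles_integrable :
    ∀ x y px py : ℝ, pb HKK HKK2 x y px py = 0 := by
  intro x y px py
  have h : ∀ a b c d : ℝ,
      pd1 HKK a b c d = 1/4 * b^2 + 4 * a^2 ∧
      pd2 HKK a b c d = 1/2 * a * b ∧
      pd3 HKK a b c d = c ∧
      pd4 HKK a b c d = d ∧
      pd1 HKK2 a b c d = d^2 * b^2 - 1/6 * a * b^4 ∧
      pd2 HKK2 a b c d = 2 * d^2 * a * b - c * d * b^2 - 1/3 * a^2 * b^3 - 1/12 * b^5 ∧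
      pd3 HKK2 a b c d = -(1/3) * d * b^3 ∧
      pd4 HKK2 a b c d = 4 * d^3 + 2 * d * a * b^2 - 1/3 * c * b^3 := by
    intro a b c d
    refine ⟨?_, ?_, ?_, ?_, ?_, ?_, ?_, ?_⟩
    all_goals simp only [pd1, pd2, pd3, pd4, HKK, HKK2]
    all_goals norm_num [deriv_fun_add, deriv_fun_sub, deriv_fun_mul, deriv_pow_field, deriv_div_const,
      deriv_const_mul, mul_comm]
    all_goals try ring
    all_goals (simp (disch := fun_prop) [deriv_fun_add, deriv_fun_mul]; ring)
  obtain ⟨h1, h2, h3, h4, h5, h6, h7, h8⟩ := h x y px py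
  simp only [pb, h1, h2, h3, h4, h5, h6, h7, h8]
  ring
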